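/- arXiv:1106.1191 — 2 statements merged into one kernel-verified Lean document; each statement's English description precedes it below -/
import Mathlib

section
/- Let k be a field of characteristic zero, let f ∈ k[z_0,...,z_n] be a polynomial of order m with homogeneous decomposition f = Σ_{k≥m} f_k, and set F(z,t) = Σ_{k≥m} t^{k-m} f_k(z). Then for any t_0 ∈ k, the polynomial F(z, t + t_0) ∈ k[z_0,...,z_n,t] (obtained by substituting t ↦ t + t_0) has order m (as a polynomial in the n+2 variables z_0,...,z_n,t), and its initial form (lowest-degree homogeneous component in all variables z, t) equals f_m(z). -/
/-!
After the shift, `F(z, t + t₀) = ∑_{d ≥ m} (t + t₀)^(d-m) f_d(z)`. Since `f_d` is homogeneous of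
degree `d`, every monomial of the `d`-th summand has degree at least `d`, whatever the first
factor is. So only the summand `d = m`, which is `f_m(z)` itself, contributes in degrees `≤ m`.
-/

open MvPolynomial

namespace MvPolynomial

variable {σ R : Type*} [CommSemiring R]

lemma homogeneousComponent_mul_eq_zero_of_lt {p q : MvPolynomial σ R} {d e : ℕ}
    (hq : q.IsHomogeneous d) (he : e < d) : homogeneousComponent e (p * q) = 0 := by
  classical
  refine homogeneousComponent_eq_zero' _ _ fun s hs => ?_
  obtain ⟨a, -, b, hb, rfl⟩ := Finset.mem_add.mp (support_mul p q hs)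
  have hbd : b.degree = d := by rw [Finsupp.degree_eq_weight_one]; exact hq (mem_support_iff.mp hb)
  rw [map_add, hbd]
  omega

lemma homogeneousComponent_sum_mul_of_isHomogeneous {s : Finset ℕ} {m e : ℕ}
    (p q : ℕ → MvPolynomial σ R) (hq : ∀ d, (q d).IsHomogeneous d) (hm : m ∈ s)
    (hs : ∀ d ∈ s, m ≤ d) (hpm : p m = 1) (he : e ≤ m) :
    homogeneousComponent e (∑ d ∈ s, p d * q d) = if e = m then q m else 0 := by
  rw [map_sum, Finset.sum_eq_single m, hpm, one_mul, homogeneousComponent_of_mem (hq m)]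
  · intro d hd hdm
    exact homogeneousComponent_mul_eq_zero_of_lt (hq d) (by have := hs d hd; omega)
  · exact absurd hm

end MvPolynomial

theorem order_and_initial_form_of_shifted_specialization_general
    {k : Type*} [Field k] {n : ℕ}
    (f : MvPolynomial (Fin (n + 1)) k) (m : ℕ)
    (hm : homogeneousComponent m f ≠ 0)
    (F : MvPolynomial (Option (Fin (n + 1))) k)
    (hF : F = ∑ d ∈ Finset.Icc m f.totalDegree,
      X (none : Option (Fin (n + 1))) ^ (d - m) *
        rename some (homogeneousComponent d f))
    (t₀ : k)
    (G : MvPolynomial (Option (Fin (n + 1))) k)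
    (hG : G = aeval (fun v : Option (Fin (n + 1)) =>
      v.elim (X (none : Option (Fin (n + 1))) + C t₀) (fun i => X (some i))) F) :
    (∀ e < m, homogeneousComponent e G = 0) ∧
      homogeneousComponent m G ≠ 0 ∧
      homogeneousComponent m G = rename some (homogeneousComponent m f) := by
  have hmle : m ≤ f.totalDegree := by
    contrapose! hm
    exact homogeneousComponent_eq_zero m f hm
  have hG_eq : G = ∑ d ∈ Finset.Icc m f.totalDegree,
      (X none + C t₀) ^ (d - m) * rename some (homogeneousComponent d f) := by
    simp only [hG, hF, map_sum, map_mul, map_pow, aeval_X, aeval_rename]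
    rw [rename_eq_aeval]
    rfl
  have hcomp (e : ℕ) (he : e ≤ m) : homogeneousComponent e G =
      if e = m then rename some (homogeneousComponent m f) else 0 := by
    rw [hG_eq]
    refine homogeneousComponent_sum_mul_of_isHomogeneous _ _
      (fun d => (homogeneousComponent_isHomogeneous d f).rename_isHomogeneous)
      (Finset.mem_Icc.mpr ⟨le_rfl, hmle⟩) (fun d hd => (Finset.mem_Icc.mp hd).1) (by simp) he
  have hinit := hcomp m le_rfl
  rw [if_pos rfl] at hinit
  refine ⟨fun e he => by rw [hcomp e he.le, if_neg he.ne], ?_, hinit⟩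
  rwa [hinit, Ne, rename_eq_zero_iff_of_injective _ (Option.some_injective _)]

/-- If `f` has order `m` and `F(z,t) = ∑_{d ≥ m} t^(d-m) f_d(z)` (with `t`
indexed by `none : Option (Fin (n+1))`), then for any `t_0 ∈ k` the polynomial
`F(z, t + t_0)` has order `m` as a polynomial in all the variables `z, t`, and
its initial form equals `f_m(z)`. -/
theorem order_and_initial_form_of_shifted_specialization
    {k : Type*} [Field k] [CharZero k] {n : ℕ}
    (f : MvPolynomial (Fin (n + 1)) k) (m : ℕ)
    (hlow : ∀ d < m, homogeneousComponent d f = 0)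
    (hm : homogeneousComponent m f ≠ 0)
    (F : MvPolynomial (Option (Fin (n + 1))) k)
    (hF : F = ∑ d ∈ Finset.Icc m f.totalDegree,
      X (none : Option (Fin (n + 1))) ^ (d - m) *
        rename some (homogeneousComponent d f))
    (t₀ : k)
    (G : MvPolynomial (Option (Fin (n + 1))) k)
    (hG : G = aeval (fun v : Option (Fin (n + 1)) =>
      v.elim (X (none : Option (Fin (n + 1))) + C t₀) (fun i => X (some i))) F) :
    (∀ e < m, homogeneousComponent e G = 0) ∧
      homogeneousComponent m G ≠ 0 ∧
      homogeneousComponent m G = rename some (homogeneousComponent m f) :=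
  order_and_initial_form_of_shifted_specialization_general f m hm F hF t₀ G hG
end

section
/- Let k be a field, let f_1, ..., f_p ∈ k[z_0,...,z_n] with f_i of order m_i, and let F_i(z,t) ∈ k[z_0,...,z_n,t] be defined by F_i(z,t) = Σ_{k≥m_i} t^{k-m_i} (f_i)_k(z). Fix c row indices α_1 < ... < α_c ≤ p and c column indices β_1 < ... < β_c ≤ n+1, and let μ be the c × c minor of the Jacobian matrix [∂f_i/∂z_j] with rows α and columns β, and let M be the corresponding c × c minor of the relative Jacobian matrix [∂F_i/∂z_j] (partial derivatives only with respect to the z-variables). Then substituting z_i ↦ t·z_i in μ yields μ(t·z) = t^{(Σ_{l=1}^{c} m_{α_l}) − c} · M(z,t) in k[z_0,...,z_n,t]. -/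
/-!
Each entry of the Jacobian minor transforms on its own: splitting `f` into homogeneous components
`f_d` (`d ≥ m`), the substitution `z ↦ t z` multiplies the degree-`(d - 1)` form `∂f_d/∂z_j` by
`t ^ (d - 1) = t ^ (m - 1) * t ^ (d - m)`, and `t ^ (d - m) ∂f_d/∂z_j` is the matching summand of
`∂F/∂z_j`. Row `l` of the substituted minor therefore carries the factor `t ^ (m_(α l) - 1)`, and
these factors come out of the determinant.
-/

open MvPolynomial

namespace MvPolynomial

variable {R σ : Type*} [CommSemiring R]

theorem IsHomogeneous.aeval_mul_left {S : Type*} [CommSemiring S] [Algebra R S]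
    {φ : MvPolynomial σ R} {e : ℕ} (hφ : φ.IsHomogeneous e) (s : S) (x : σ → S) :
    MvPolynomial.aeval (fun i => s * x i) φ = s ^ e * MvPolynomial.aeval x φ := by
  conv_lhs => rw [φ.as_sum]
  conv_rhs => rw [φ.as_sum]
  simp only [map_sum, Finset.mul_sum, aeval_monomial]
  refine Finset.sum_congr rfl fun u hu => ?_
  have hdeg : ∑ i ∈ u.support, u i = e := by
    simpa [Finsupp.weight_apply, Finsupp.sum] using hφ (mem_support_iff.mp hu)
  simp only [Finsupp.prod, mul_pow, Finset.prod_mul_distrib, Finset.prod_pow_eq_pow_sum, hdeg]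
  ring

theorem sum_Icc_homogeneousComponent {φ : MvPolynomial σ R} {m : ℕ}
    (hlow : ∀ d < m, homogeneousComponent d φ = 0) :
    ∑ d ∈ Finset.Icc m φ.totalDegree, homogeneousComponent d φ = φ := by
  conv_rhs => rw [← sum_homogeneousComponent φ]
  refine Finset.sum_subset (fun d hd => ?_) (fun d hd hd' => hlow d ?_)
  · simp only [Finset.mem_Icc, Finset.mem_range] at hd ⊢
    omega
  · simp only [Finset.mem_Icc, Finset.mem_range] at hd hd'
    omega

/-- `t ^ (-m) φ(t • z)` for `φ` of order `m`, where `t = X none` and `z i = X (some i)`. -/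
noncomputable def orderRescale (m : ℕ) (φ : MvPolynomial σ R) : MvPolynomial (Option σ) R :=
  ∑ d ∈ Finset.Icc m φ.totalDegree, X none ^ (d - m) * rename some (homogeneousComponent d φ)

theorem pderiv_some_orderRescale (m : ℕ) (φ : MvPolynomial σ R) (j : σ) :
    pderiv (some j) (orderRescale m φ) = ∑ d ∈ Finset.Icc m φ.totalDegree,
      X none ^ (d - m) * rename some (pderiv j (homogeneousComponent d φ)) := by
  simp [orderRescale, pderiv_rename (Option.some_injective σ),
    pderiv_X_of_ne (Option.some_ne_none j).symm]

theorem aeval_X_none_mul_X_some_pderiv {φ : MvPolynomial σ R} {m : ℕ} (hm : 0 < m)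
    (hlow : ∀ d < m, homogeneousComponent d φ = 0) (j : σ) :
    aeval (fun i => X none * X (some i)) (pderiv j φ) =
      X none ^ (m - 1) * pderiv (some j) (orderRescale m φ) := by
  conv_lhs => rw [← sum_Icc_homogeneousComponent hlow]
  rw [pderiv_some_orderRescale, map_sum, map_sum, Finset.mul_sum]
  refine Finset.sum_congr rfl fun d hd => ?_
  rw [((homogeneousComponent_isHomogeneous d φ).pderiv).aeval_mul_left, ← mul_assoc, ← pow_add]
  congr 2
  · simp only [Finset.mem_Icc] at hd
    omega
  · exact (rename_eq_aeval some).symm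

end MvPolynomial

theorem jacobian_minor_subst_general {k : Type*} [Field k] {n p c : ℕ}
    (f : Fin p → MvPolynomial (Fin (n + 1)) k) (m : Fin p → ℕ)
    (hm0 : ∀ i, 0 < m i)
    (hlow : ∀ i, ∀ d < m i, homogeneousComponent d (f i) = 0)
    (F : Fin p → MvPolynomial (Option (Fin (n + 1))) k)
    (hF : ∀ i, F i = ∑ d ∈ Finset.Icc (m i) (f i).totalDegree,
      X (none : Option (Fin (n + 1))) ^ (d - m i) *
        rename some (homogeneousComponent d (f i)))
    (α : Fin c → Fin p)
    (β : Fin c → Fin (n + 1))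
    (μ M : _)
    (hμ : μ = Matrix.det (Matrix.of fun a b : Fin c => pderiv (β b) (f (α a))))
    (hM : M = Matrix.det
      (Matrix.of fun a b : Fin c => pderiv (some (β b) : Option (Fin (n + 1))) (F (α a)))) :
    aeval (fun i : Fin (n + 1) =>
        X (none : Option (Fin (n + 1))) * X (some i)) μ
      = X (none : Option (Fin (n + 1))) ^ ((∑ l, m (α l)) - c) * M := by
  have hentries : (Matrix.of fun a b : Fin c => pderiv (β b) (f (α a))).map
      (aeval fun i => X none * X (some i)) = Matrix.of fun a b =>
        X none ^ (m (α a) - 1) * pderiv (some (β b)) (F (α a)) := by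
    ext a b : 1
    simp only [Matrix.map_apply, Matrix.of_apply, hF]
    exact aeval_X_none_mul_X_some_pderiv (hm0 (α a)) (hlow (α a)) (β b)
  have hexp : ∑ l, (m (α l) - 1) = (∑ l, m (α l)) - c := by
    rw [Finset.sum_tsub_distrib _ fun l _ => hm0 (α l), Finset.sum_const, Finset.card_univ,
      Fintype.card_fin, smul_eq_mul, mul_one]
  rw [hμ, hM, AlgHom.map_det, AlgHom.mapMatrix_apply, hentries, ← hexp,
    ← Finset.prod_pow_eq_pow_sum]
  exact Matrix.det_mul_column (fun a => X none ^ (m (α a) - 1))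
    (Matrix.of fun a b => pderiv (some (β b)) (F (α a)))

/-- Let `f_1, ..., f_p ∈ k[z_0, ..., z_n]` with `f_i` of order `m_i ≥ 1`, and
let `F_i(z,t) = ∑_{d ≥ m_i} t^(d-m_i) (f_i)_d(z)` (with `t` indexed by
`none : Option (Fin (n+1))`).  For strictly increasing choices of `c` rows `α`
and `c` columns `β`, let `μ` be the corresponding `c × c` minor of the Jacobian
matrix `[∂f_i/∂z_j]` and `M` the corresponding minor of the relative Jacobian
matrix `[∂F_i/∂z_j]`.  Then `μ(t·z) = t^((∑_l m_(α l)) - c) * M(z,t)`. -/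
theorem jacobian_minor_subst {k : Type*} [Field k] [CharZero k] {n p c : ℕ}
    (f : Fin p → MvPolynomial (Fin (n + 1)) k) (m : Fin p → ℕ)
    (hm0 : ∀ i, 0 < m i)
    (hlow : ∀ i, ∀ d < m i, homogeneousComponent d (f i) = 0)
    (hord : ∀ i, homogeneousComponent (m i) (f i) ≠ 0)
    (F : Fin p → MvPolynomial (Option (Fin (n + 1))) k)
    (hF : ∀ i, F i = ∑ d ∈ Finset.Icc (m i) (f i).totalDegree,
      X (none : Option (Fin (n + 1))) ^ (d - m i) *
        rename some (homogeneousComponent d (f i)))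
    (α : Fin c → Fin p) (hα : StrictMono α)
    (β : Fin c → Fin (n + 1)) (hβ : StrictMono β)
    (μ M : _)
    (hμ : μ = Matrix.det (Matrix.of fun a b : Fin c => pderiv (β b) (f (α a))))
    (hM : M = Matrix.det
      (Matrix.of fun a b : Fin c => pderiv (some (β b) : Option (Fin (n + 1))) (F (α a)))) :
    aeval (fun i : Fin (n + 1) =>
        X (none : Option (Fin (n + 1))) * X (some i)) μ
      = X (none : Option (Fin (n + 1))) ^ ((∑ l, m (α l)) - c) * M :=
  jacobian_minor_subst_general f m hm0 hlow F hF α β μ M hμ hM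
end
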